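/- arXiv:1112.1746 — 6 statements merged into one kernel-verified Lean document; each statement's English description precedes it below -/
import Mathlib

section
/- Let T be a one-parameter semigroup of bounded linear operators on a real Banach space X with ‖T t‖ ≤ M·exp(w·t) for all t ≥ 0. Then the set D = {x ∈ X : for every t > 0 there exists y ∈ X with T t y = x} (equivalently, D = ⋂_{t>0} range(T t)) is dense in X if and only if for every t > 0 the set D_t = range(T t) is dense in X. -/
open NNReal Filter

/-- **Lemma 1.** For a linear semigroup `T` of bounded operators on a real Banach
space `X` with `‖T t‖ ≤ M exp (w t)`, the set
`D = {x : ∀ t > 0, ∃ y, T t y = x}` is dense in `X` if and only if for every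
`t > 0` the range of `T t` is dense in `X`. -/
theorem semigroup_D_dense_iff_ranges_dense
    {X : Type*} [NormedAddCommGroup X] [NormedSpace ℝ X] [CompleteSpace X]
    (T : ℝ≥0 → X →L[ℝ] X) (M w : ℝ) (hM : 1 ≤ M) (hw : 0 ≤ w)
    (hT0 : T 0 = ContinuousLinearMap.id ℝ X)
    (hTadd : ∀ s t : ℝ≥0, T (s + t) = (T s).comp (T t))
    (hbound : ∀ t : ℝ≥0, ‖T t‖ ≤ M * Real.exp (w * (t : ℝ))) :
    Dense {x : X | ∀ t : ℝ≥0, 0 < t → ∃ y : X, T t y = x} ↔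
      ∀ t : ℝ≥0, 0 < t → Dense (Set.range (T t)) := by
  constructor
  · intro hD t ht
    refine hD.mono ?_
    intro x hx
    exact hx t ht
  · intro hranges
    rw [Metric.dense_iff]
    intro x ε hε
    have hMpos : (0:ℝ) < M := lt_of_lt_of_le one_pos hM
    -- density of range of T 1 rephrased
    have key : ∀ (v : X) (δ : ℝ), ∃ z : X, 0 < δ → ‖T 1 z - v‖ < δ := by
      intro v δ
      by_cases hδ : 0 < δ
      · obtain ⟨y, hy1, hy2⟩ := Metric.dense_iff.mp (hranges 1 one_pos) v δ hδ
        obtain ⟨z, hz⟩ := hy2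
        exact ⟨z, fun _ => by
          rw [hz]
          simpa [dist_eq_norm, norm_sub_rev] using hy1⟩
      · exact ⟨0, fun h => absurd h hδ⟩
    choose f hf using key
    -- the tolerance sequence
    set δseq : ℕ → ℝ := fun n => ε / 2 ^ (n + 3) / (M * Real.exp (w * (n + 1))) with hδseq
    have hδpos : ∀ n, 0 < δseq n := by
      intro n
      apply div_pos (div_pos hε (by positivity)) (by positivity)
    -- key algebraic estimate
    have hkey : ∀ (k : ℕ) (c : ℝ), c ≤ k + 1 →
        M * Real.exp (w * c) * δseq k ≤ ε / 2 ^ (k + 3) := by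
      intro k c hc
      have h1 : M * Real.exp (w * c) ≤ M * Real.exp (w * (k + 1)) := by
        apply mul_le_mul_of_nonneg_left _ hMpos.le
        exact Real.exp_le_exp.mpr (mul_le_mul_of_nonneg_left hc hw)
      calc M * Real.exp (w * c) * δseq k
          ≤ M * Real.exp (w * (k + 1)) * δseq k :=
            mul_le_mul_of_nonneg_right h1 (hδpos k).le
        _ = ε / 2 ^ (k + 3) := by
            rw [hδseq]
            field_simp
    -- operator norm estimate
    have hTnorm : ∀ (c : ℝ≥0) (v : X), ‖T c v‖ ≤ M * Real.exp (w * (c : ℝ)) * ‖v‖ := by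
      intro c v
      exact le_trans ((T c).le_opNorm v)
        (mul_le_mul_of_nonneg_right (hbound c) (norm_nonneg v))
    -- the recursive sequence of approximate preimages
    set z : ℕ → X := fun n => Nat.rec (f x (ε / 2)) (fun n zn => f zn (δseq n)) n with hz
    have hz0 : ‖T 1 (z 0) - x‖ < ε / 2 := hf x (ε / 2) (half_pos hε)
    have hzs : ∀ n, ‖T 1 (z (n + 1)) - z n‖ < δseq n := fun n => hf (z n) (δseq n) (hδpos n)
    -- the main sequence
    set a : ℕ → X := fun n => T ((n : ℝ≥0) + 1) (z n) with ha
    -- difference estimate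
    have hstep : ∀ (k : ℕ) (s : ℝ≥0), (s : ℝ) ≤ k + 1 →
        ‖T s (T 1 (z (k + 1))) - T s (z k)‖ ≤ ε / 2 ^ (k + 3) := by
      intro k s hs
      rw [← map_sub]
      calc ‖T s (T 1 (z (k + 1)) - z k)‖
          ≤ M * Real.exp (w * (s : ℝ)) * ‖T 1 (z (k + 1)) - z k‖ := hTnorm s _
        _ ≤ M * Real.exp (w * (s : ℝ)) * δseq k := by
            apply mul_le_mul_of_nonneg_left (hzs k).le (by positivity)
        _ ≤ ε / 2 ^ (k + 3) := hkey k s hs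
    have hadiff : ∀ n, dist (a n) (a (n + 1)) ≤ (ε / 8) * (1 / 2) ^ n := by
      intro n
      have hcomp : a (n + 1) = T ((n : ℝ≥0) + 1) (T 1 (z (n + 1))) := by
        have : ((n + 1 : ℕ) : ℝ≥0) + 1 = ((n : ℝ≥0) + 1) + 1 := by push_cast; ring
        simp only [ha, this, hTadd ((n : ℝ≥0) + 1) 1]
        rfl
      rw [dist_eq_norm, norm_sub_rev, hcomp]
      simp only [ha]
      calc ‖T ((n : ℝ≥0) + 1) (T 1 (z (n + 1))) - T ((n : ℝ≥0) + 1) (z n)‖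
          ≤ ε / 2 ^ (n + 3) := hstep n ((n : ℝ≥0) + 1) (by push_cast; exact le_refl _)
        _ = (ε / 8) * (1 / 2) ^ n := by
            rw [pow_add, div_pow, one_pow]
            rw [div_mul_eq_div_div]
            norm_num
            ring
    have hrlt : (1 : ℝ) / 2 < 1 := by norm_num
    have hacauchy : CauchySeq a := cauchySeq_of_le_geometric (1 / 2) (ε / 8) hrlt hadiff
    obtain ⟨L, hL⟩ := cauchySeq_tendsto_of_complete hacauchy
    -- distance from x to L
    have hd0 : dist (a 0) L ≤ (ε / 8) / (1 - 1 / 2) :=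
      dist_le_of_le_geometric_of_tendsto₀ (1 / 2) (ε / 8) hrlt hadiff hL
    have hdx : dist x L < ε := by
      have h1 : dist x (a 0) < ε / 2 := by
        have : a 0 = T 1 (z 0) := by simp [ha]
        rw [this, dist_eq_norm, norm_sub_rev]
        exact hz0
      calc dist x L ≤ dist x (a 0) + dist (a 0) L := dist_triangle _ _ _
        _ < ε / 2 + (ε / 8) / (1 - 1 / 2) := by
            exact add_lt_add_of_lt_of_le h1 hd0
        _ ≤ ε := by
            have h4 : (ε / 8) / (1 - 1 / 2 : ℝ) = ε / 4 := by
              rw [div_div]; norm_num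
            rw [h4]; linarith
    -- membership of L in D
    refine ⟨L, Metric.mem_ball'.mpr hdx, ?_⟩
    intro t ht
    set N : ℕ := ⌈(t : ℝ)⌉₊ with hN
    have htN : ∀ n : ℕ, t ≤ ((n + N + 1 : ℕ) : ℝ≥0) := by
      intro n
      have h1 : (t : ℝ) ≤ N := Nat.le_ceil _
      have : (t : ℝ) ≤ ((n + N + 1 : ℕ) : ℝ) := by push_cast; linarith [Nat.cast_nonneg (α := ℝ) n]
      exact_mod_cast this
    set s : ℕ → ℝ≥0 := fun n => ((n + N + 1 : ℕ) : ℝ≥0) - t with hs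
    have hts : ∀ n, t + s n = ((n + N + 1 : ℕ) : ℝ≥0) := fun n =>
      add_tsub_cancel_of_le (htN n)
    have hsle : ∀ n, ((s n : ℝ≥0) : ℝ) ≤ (n + N : ℕ) + 1 := by
      intro n
      have h1 : s n ≤ ((n + N + 1 : ℕ) : ℝ≥0) := tsub_le_self
      have h2 : ((s n : ℝ≥0) : ℝ) ≤ ((n + N + 1 : ℕ) : ℝ) := by exact_mod_cast h1
      push_cast at h2 ⊢
      linarith
    have hssucc : ∀ n, s (n + 1) = s n + 1 := by
      intro n
      rw [hs]
      simp only
      have hc : ((n + 1 + N + 1 : ℕ) : ℝ≥0) = ((n + N + 1 : ℕ) : ℝ≥0) + 1 := by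
        push_cast; ring
      rw [hc, ← tsub_add_eq_add_tsub (htN n)]
    set g : ℕ → X := fun n => T (s n) (z (n + N)) with hg
    have hTg : ∀ n, T t (g n) = a (n + N) := by
      intro n
      have : T t (T (s n) (z (n + N))) = T (t + s n) (z (n + N)) := by
        rw [hTadd t (s n)]; rfl
      rw [hg]
      simp only
      rw [this, hts n, ha]
      have : ((n + N + 1 : ℕ) : ℝ≥0) = ((n + N : ℕ) : ℝ≥0) + 1 := by push_cast; ring
      rw [this]
    have hgdiff : ∀ n, dist (g n) (g (n + 1)) ≤ (ε / 2 ^ (N + 3)) * (1 / 2) ^ n := by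
      intro n
      have hcomp : g (n + 1) = T (s n) (T 1 (z (n + N + 1))) := by
        rw [hg]
        simp only
        rw [hssucc n, hTadd (s n) 1]
        have : n + 1 + N = n + N + 1 := by ring
        rw [this]
        rfl
      rw [dist_eq_norm, norm_sub_rev, hcomp]
      calc ‖T (s n) (T 1 (z (n + N + 1))) - T (s n) (z (n + N))‖
          ≤ ε / 2 ^ (n + N + 3) := hstep (n + N) (s n) (hsle n)
        _ = (ε / 2 ^ (N + 3)) * (1 / 2) ^ n := by
            rw [show n + N + 3 = (N + 3) + n by ring, pow_add, div_pow, one_pow]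
            rw [div_mul_eq_div_div]
            norm_num
            ring
    have hgcauchy : CauchySeq g := cauchySeq_of_le_geometric (1 / 2) (ε / 2 ^ (N + 3)) hrlt hgdiff
    obtain ⟨y, hy⟩ := cauchySeq_tendsto_of_complete hgcauchy
    refine ⟨y, ?_⟩
    have h1 : Tendsto (fun n => T t (g n)) atTop (nhds (T t y)) :=
      ((T t).continuous.tendsto y).comp hy
    have h2 : Tendsto (fun n => a (n + N)) atTop (nhds L) :=
      hL.comp (tendsto_add_atTop_nat N)
    have h3 : Tendsto (fun n => T t (g n)) atTop (nhds L) := by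
      simpa only [hTg] using h2
    exact tendsto_nhds_unique h1 h3
end

section
/- Let C be a closed subset of a real Banach space X and let T be a (possibly nonlinear) semigroup of maps T t : C → C satisfying ‖T t x − T t y‖ ≤ M·exp(w·t)·‖x − y‖ for all x, y ∈ C and t ≥ 0. Then the set D = {x ∈ C : for every t > 0 there exists y ∈ C with T t y = x} is dense in C if and only if for every t > 0 the image T t (C) is dense in C. -/
open NNReal Filter Topology

/-- **Lemma 2.** For a (possibly nonlinear) semigroup `T` on a closed subset `C`
of a real Banach space `X`, satisfying `‖T t x − T t y‖ ≤ M exp (w t) ‖x − y‖`,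
the set `D = {x ∈ C : ∀ t > 0, ∃ y ∈ C, T t y = x}` is dense in `C` if and only
if for every `t > 0` the image `T t '' C` is dense in `C`. -/
theorem nonlinear_semigroup_D_dense_iff_ranges_dense
    {X : Type*} [NormedAddCommGroup X] [NormedSpace ℝ X] [CompleteSpace X]
    (C : Set X) (hC : IsClosed C)
    (T : ℝ≥0 → C → C) (M w : ℝ) (hM : 1 ≤ M) (hw : 0 ≤ w)
    (hT0 : T 0 = id)
    (hTadd : ∀ s t : ℝ≥0, T (s + t) = T s ∘ T t)
    (hLip : ∀ t : ℝ≥0, ∀ x y : C,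
      ‖(T t x : X) - (T t y : X)‖ ≤ M * Real.exp (w * (t : ℝ)) * ‖(x : X) - (y : X)‖) :
    Dense {x : C | ∀ t : ℝ≥0, 0 < t → ∃ y : C, T t y = x} ↔
      ∀ t : ℝ≥0, 0 < t → Dense (Set.range (T t)) := by
  haveI : CompleteSpace C := hC.completeSpace_coe
  have hM0 : (0:ℝ) < M := lt_of_lt_of_le one_pos hM
  have hdist : ∀ a b : C, dist a b = ‖(a : X) - (b : X)‖ := fun a b => by
    rw [Subtype.dist_eq, dist_eq_norm]
  constructor
  · intro hD t ht
    have hsub : {x : C | ∀ t : ℝ≥0, 0 < t → ∃ y : C, T t y = x} ⊆ Set.range (T t) :=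
      fun x hx => hx t ht
    exact Dense.mono hsub hD
  · intro hrng
    -- continuity of each T s
    have hcont : ∀ s : ℝ≥0, Continuous (T s) := by
      intro s
      have : LipschitzWith (Real.toNNReal (M * Real.exp (w * (s : ℝ)))) (T s) := by
        apply LipschitzWith.of_dist_le_mul
        intro a b
        rw [hdist, hdist, Real.coe_toNNReal _
          (mul_nonneg hM0.le (Real.exp_pos _).le)]
        exact hLip s a b
      exact this.continuous
    rw [Metric.dense_iff]
    intro x ε hε
    -- approximation choice function
    have key : ∀ (c : C) (δ : ℝ), ∃ v : C, 0 < δ → ‖(T 1 v : X) - (c : X)‖ < δ := by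
      intro c δ
      by_cases hδ : 0 < δ
      · obtain ⟨u, hu, v, hv⟩ := Metric.dense_iff.mp (hrng 1 one_pos) c δ hδ
        refine ⟨v, fun _ => ?_⟩
        rw [Metric.mem_ball, hdist] at hu
        rw [hv]
        exact hu
      · exact ⟨c, fun h => absurd h hδ⟩
    choose f hf using key
    have hdelpos : ∀ n : ℕ, (0:ℝ) < ε / (2 ^ (n + 3) * (M * Real.exp (w * (n + 1)))) :=
      fun n => div_pos hε (mul_pos (by positivity) (mul_pos hM0 (Real.exp_pos _)))
    obtain ⟨y, hy0, hyS⟩ :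
        ∃ y : ℕ → C, ‖(T 1 (y 0) : X) - (x : X)‖ < ε / 2 ∧
          ∀ n, ‖(T 1 (y (n + 1)) : X) - (y n : X)‖
            ≤ ε / (2 ^ (n + 3) * (M * Real.exp (w * (n + 1)))) :=
      ⟨fun n => Nat.rec (f x (ε / 2))
          (fun k yk => f yk (ε / (2 ^ (k + 3) * (M * Real.exp (w * (k + 1)))))) n,
        hf x (ε / 2) (by positivity), fun n => (hf _ _ (hdelpos n)).le⟩
    -- the common step estimate
    have hstep : ∀ (s : ℝ≥0) (n : ℕ), (s : ℝ) ≤ (n : ℝ) + 1 →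
        ‖(T s (T 1 (y (n + 1))) : X) - (T s (y n) : X)‖ ≤ ε / 2 ^ (n + 3) := by
      intro s n hs
      have h2 := hLip s (T 1 (y (n + 1))) (y n)
      have h3 := hyS n
      have h4 : M * Real.exp (w * (s : ℝ)) ≤ M * Real.exp (w * ((n : ℝ) + 1)) := by
        apply mul_le_mul_of_nonneg_left _ hM0.le
        exact Real.exp_le_exp.mpr (mul_le_mul_of_nonneg_left hs hw)
      have hE : (0:ℝ) < M * Real.exp (w * ((n : ℝ) + 1)) := mul_pos hM0 (Real.exp_pos _)
      calc ‖(T s (T 1 (y (n + 1))) : X) - (T s (y n) : X)‖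
          ≤ M * Real.exp (w * (s : ℝ)) * ‖(T 1 (y (n + 1)) : X) - (y n : X)‖ := h2
        _ ≤ (M * Real.exp (w * ((n : ℝ) + 1))) *
            (ε / (2 ^ (n + 3) * (M * Real.exp (w * (n + 1))))) := by
            apply mul_le_mul h4 h3 (norm_nonneg _)
            exact hE.le
        _ = ε / 2 ^ (n + 3) := by
            field_simp
    -- the sequence z of approximants
    set z : ℕ → C := fun n => T ((n + 1 : ℕ) : ℝ≥0) (y n) with hz_def
    have hzsplit : ∀ n, z (n + 1) = T ((n + 1 : ℕ) : ℝ≥0) (T 1 (y (n + 1))) := by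
      intro n
      show T ((n + 2 : ℕ) : ℝ≥0) (y (n + 1)) = _
      have h1 : ((n + 2 : ℕ) : ℝ≥0) = ((n + 1 : ℕ) : ℝ≥0) + 1 := by push_cast; ring
      rw [h1, hTadd]; rfl
    have hpow : ∀ n : ℕ, ε / 2 ^ (n + 3) ≤ (ε / 8) * (1 / 2 : ℝ) ^ n := by
      intro n
      have : (2:ℝ) ^ (n + 3) = 2 ^ n * 8 := by rw [pow_add]; norm_num
      have h : (ε / 8) * (1 / 2 : ℝ) ^ n = ε / 2 ^ (n + 3) := by
        rw [this, div_pow, one_pow, div_mul_div_comm, mul_one, mul_comm (8:ℝ) (2 ^ n)]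
      rw [h]
    have hzstep : ∀ n, dist (z n) (z (n + 1)) ≤ (ε / 8) * (1 / 2) ^ n := by
      intro n
      rw [hdist, norm_sub_rev, hzsplit n]
      calc ‖(T ((n + 1 : ℕ) : ℝ≥0) (T 1 (y (n + 1))) : X) - (z n : X)‖
          ≤ ε / 2 ^ (n + 3) := hstep ((n + 1 : ℕ) : ℝ≥0) n (by push_cast; linarith)
        _ ≤ (ε / 8) * (1 / 2) ^ n := hpow n
    have hzC : CauchySeq z := cauchySeq_of_le_geometric (1/2) (ε/8) (by norm_num) hzstep
    obtain ⟨zl, hzl⟩ := cauchySeq_tendsto_of_complete hzC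
    have hz0 : dist (z 0) zl ≤ (ε / 8) / (1 - 1/2) :=
      dist_le_of_le_geometric_of_tendsto₀ (1/2) (ε/8) (by norm_num) hzstep hzl
    refine ⟨zl, ?_, ?_⟩
    · -- zl ∈ ball x ε
      rw [Metric.mem_ball]
      have hzx : dist (z 0) x < ε / 2 := by
        rw [hdist]
        have h01 : ((0 + 1 : ℕ) : ℝ≥0) = 1 := by norm_num
        show ‖(T ((0 + 1 : ℕ) : ℝ≥0) (y 0) : X) - (x : X)‖ < ε / 2
        rw [h01]
        exact hy0
      have h4 : (ε / 8) / (1 - 1/2) = ε / 4 := by ring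
      calc dist zl x ≤ dist zl (z 0) + dist (z 0) x := dist_triangle _ _ _
        _ ≤ (ε / 8) / (1 - 1/2) + dist (z 0) x := by
            rw [dist_comm]; exact add_le_add hz0 le_rfl
        _ < (ε / 8) / (1 - 1/2) + ε / 2 := by linarith
        _ ≤ ε := by rw [h4]; linarith
    · -- zl ∈ D
      intro t ht
      have hm0 : 0 < ⌈t⌉₊ := Nat.ceil_pos.mpr ht
      obtain ⟨p, hp⟩ : ∃ p, ⌈t⌉₊ = p + 1 := ⟨⌈t⌉₊ - 1, (Nat.succ_pred_eq_of_pos hm0).symm⟩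
      set b : ℕ → C := fun k => T ((k : ℕ) : ℝ≥0) (y (k + p)) with hb_def
      have hTb : ∀ k, T (((p + 1 : ℕ)) : ℝ≥0) (b k) = z (k + p) := by
        intro k
        show T (((p + 1 : ℕ)) : ℝ≥0) (T ((k : ℕ) : ℝ≥0) (y (k + p)))
          = T ((k + p + 1 : ℕ) : ℝ≥0) (y (k + p))
        have hcast : ((k + p + 1 : ℕ) : ℝ≥0) = ((p + 1 : ℕ) : ℝ≥0) + ((k : ℕ) : ℝ≥0) := by
          push_cast; ring
        rw [hcast, hTadd]; rfl
      have hbsplit : ∀ k, b (k + 1) = T ((k : ℕ) : ℝ≥0) (T 1 (y (k + p + 1))) := by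
        intro k
        show T ((k + 1 : ℕ) : ℝ≥0) (y (k + 1 + p)) = _
        have h1 : ((k + 1 : ℕ) : ℝ≥0) = ((k : ℕ) : ℝ≥0) + 1 := by push_cast; ring
        have h2 : k + 1 + p = k + p + 1 := by omega
        rw [h1, h2, hTadd]; rfl
      have hbstep : ∀ k, dist (b k) (b (k + 1)) ≤ ((ε / 8) * ((1:ℝ)/2) ^ p) * (1/2) ^ k := by
        intro k
        rw [hdist, norm_sub_rev, hbsplit k]
        calc ‖(T ((k : ℕ) : ℝ≥0) (T 1 (y (k + p + 1))) : X) - (b k : X)‖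
            ≤ ε / 2 ^ (k + p + 3) := hstep ((k : ℕ) : ℝ≥0) (k + p) (by push_cast; linarith)
          _ ≤ (ε / 8) * (1 / 2 : ℝ) ^ (k + p) := hpow (k + p)
          _ = ((ε / 8) * ((1:ℝ)/2) ^ p) * (1/2) ^ k := by rw [pow_add]; ring
      have hbC : CauchySeq b := cauchySeq_of_le_geometric (1/2) _ (by norm_num) hbstep
      obtain ⟨wl, hwl⟩ := cauchySeq_tendsto_of_complete hbC
      have h1 : Tendsto (fun k => T (((p + 1 : ℕ)) : ℝ≥0) (b k)) atTop
          (𝓝 (T (((p + 1 : ℕ)) : ℝ≥0) wl)) :=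
        ((hcont _).tendsto wl).comp hwl
      have h2 : Tendsto (fun k => z (k + p)) atTop (𝓝 zl) := hzl.comp (tendsto_add_atTop_nat p)
      have heq : T (((p + 1 : ℕ)) : ℝ≥0) wl = zl := by
        refine tendsto_nhds_unique ?_ h2
        have heq2 : (fun k => T (((p + 1 : ℕ)) : ℝ≥0) (b k)) = fun k => z (k + p) :=
          funext hTb
        rwa [heq2] at h1
      have htm : t ≤ ((p + 1 : ℕ) : ℝ≥0) := by
        rw [← hp]
        exact Nat.le_ceil t
      refine ⟨T (((p + 1 : ℕ) : ℝ≥0) - t) wl, ?_⟩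
      have hsum : t + (((p + 1 : ℕ) : ℝ≥0) - t) = ((p + 1 : ℕ) : ℝ≥0) :=
        add_tsub_cancel_of_le htm
      calc T t (T (((p + 1 : ℕ) : ℝ≥0) - t) wl)
          = T (t + (((p + 1 : ℕ) : ℝ≥0) - t)) wl := by rw [hTadd]; rfl
        _ = zl := by rw [hsum, heq]
end

section
/- Let T be a one-parameter semigroup of bounded linear operators on a real Banach space X that is strongly continuous at 0 (T t x → x as t → 0+ for every x ∈ X) and holomorphic in the following sense: for every t₀ > 0 there exist ε > 0 and bounded linear operators A_k : X → X (k ∈ ℕ) such that T t x = ∑_{k=0}^∞ (t − t₀)^k · (A_k x) for all t ≥ 0 with |t − t₀| < ε and all x ∈ X. Then the set D = {x ∈ X : for every t > 0 there exists y ∈ X with T t y = x} is dense in X. -/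
open NNReal Filter

/-- A real function given near `t₀` by a pointwise convergent scalar power series is
analytic at `t₀`. -/
lemma analyticAt_of_hasSum_pow {g : ℝ → ℝ} {c : ℕ → ℝ} {t₀ r : ℝ} (hr : 0 < r)
    (h : ∀ y : ℝ, |y| < r → HasSum (fun k : ℕ => y ^ k * c k) (g (t₀ + y))) :
    AnalyticAt ℝ g t₀ := by
  set p := FormalMultilinearSeries.ofScalars ℝ c with hp
  have hradius : ENNReal.ofReal r ≤ p.radius := by
    refine ENNReal.le_of_forall_nnreal_lt (fun ρ hρ => ?_)
    have hρr : (ρ : ℝ) < r := by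
      rw [← ENNReal.ofReal_coe_nnreal] at hρ
      exact (ENNReal.ofReal_lt_ofReal_iff_of_nonneg ρ.coe_nonneg).1 hρ
    have hs : Summable (fun k : ℕ => (ρ : ℝ) ^ k * c k) :=
      (h ρ (by rwa [abs_of_nonneg ρ.coe_nonneg])).summable
    have htend : Tendsto (fun k : ℕ => |(ρ : ℝ) ^ k * c k|) atTop (nhds 0) := by
      simpa using hs.tendsto_atTop_zero.abs
    obtain ⟨C, hC⟩ := htend.bddAbove_range
    refine p.le_radius_of_bound C (fun n => ?_)
    have hmem : |(ρ : ℝ) ^ n * c n| ≤ C := hC ⟨n, rfl⟩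
    have hn : ‖p n‖ = |c n| := by
      rw [hp, FormalMultilinearSeries.ofScalars_norm, Real.norm_eq_abs]
    calc ‖p n‖ * (ρ : ℝ) ^ n = |c n| * (ρ : ℝ) ^ n := by rw [hn]
      _ = |(ρ : ℝ) ^ n * c n| := by
          rw [abs_mul, abs_of_nonneg (pow_nonneg ρ.coe_nonneg n), mul_comm]
      _ ≤ C := hmem
  have hball : HasFPowerSeriesOnBall g p t₀ (ENNReal.ofReal r) := by
    refine ⟨hradius, by simpa using hr, ?_⟩
    intro y hy
    have hy' : |y| < r := by
      rw [EMetric.mem_ball, edist_dist, dist_zero_right, Real.norm_eq_abs] at hy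
      exact (ENNReal.ofReal_lt_ofReal_iff hr).1 hy
    have := h y hy'
    have happ : ∀ n : ℕ, (p n fun _ => y) = y ^ n * c n := by
      intro n
      rw [hp, FormalMultilinearSeries.ofScalars_apply_eq]
      simp [smul_eq_mul, mul_comm]
    simpa [happ] using this
  exact hball.analyticAt

/-- **Proposition 1.** If `T` is a strongly continuous (at `0`) linear semigroup
on a real Banach space `X` which is holomorphic, i.e. locally around every
`t₀ > 0` it admits a Taylor expansion `T t x = ∑ₖ (t − t₀)^k • (A k x)` with
bounded operators `A k`, then the set
`D = {x : ∀ t > 0, ∃ y, T t y = x}` is dense in `X`. -/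
theorem holomorphic_semigroup_D_dense
    {X : Type*} [NormedAddCommGroup X] [NormedSpace ℝ X] [CompleteSpace X]
    (T : ℝ≥0 → X →L[ℝ] X)
    (hT0 : T 0 = ContinuousLinearMap.id ℝ X)
    (hTadd : ∀ s t : ℝ≥0, T (s + t) = (T s).comp (T t))
    (hcont : ∀ x : X, Tendsto (fun t : ℝ≥0 => T t x) (nhdsWithin 0 (Set.Ioi 0)) (nhds x))
    (hholo : ∀ t₀ : ℝ≥0, 0 < t₀ → ∃ ε : ℝ, 0 < ε ∧ ∃ A : ℕ → X →L[ℝ] X,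
      ∀ t : ℝ≥0, |(t : ℝ) - (t₀ : ℝ)| < ε → ∀ x : X,
        HasSum (fun k : ℕ => ((t : ℝ) - (t₀ : ℝ)) ^ k • A k x) (T t x)) :
    Dense {x : X | ∀ t : ℝ≥0, 0 < t → ∃ y : X, T t y = x} := by
  classical
  set S : X →L[ℝ] X := T 1 with hS
  -- Step 1: S = T 1 has dense range.
  have hdr : DenseRange ⇑S := by
    by_contra hd
    rw [DenseRange, Dense] at hd
    push_neg at hd
    obtain ⟨x₀, hx₀⟩ := hd
    have hconv : Convex ℝ (closure (Set.range ⇑S)) := by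
      have : Convex ℝ (Set.range ⇑S) := by
        have := (convex_univ : Convex ℝ (Set.univ : Set X)).linear_image
          (S : X →ₗ[ℝ] X)
        simpa [Set.image_univ] using this
      exact this.closure
    obtain ⟨f, u, hfu, hux⟩ :=
      geometric_hahn_banach_closed_point hconv isClosed_closure hx₀
    -- f vanishes on the range of S
    have hf0 : ∀ z : X, f (S z) = 0 := by
      intro z
      by_contra hz
      have hcz : ∀ c : ℝ, c * f (S z) < u := by
        intro c
        have : f (S (c • z)) < u :=
          hfu _ (subset_closure ⟨c • z, rfl⟩)
        simpa [map_smul, smul_eq_mul] using this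
      have := hcz ((|u| + 1) / f (S z))
      rw [div_mul_cancel₀ _ hz] at this
      have : u < |u| + 1 := lt_of_le_of_lt (le_abs_self u) (by linarith)
      linarith [hcz ((|u| + 1) / f (S z)), div_mul_cancel₀ (|u| + 1) hz]
    have hu0 : 0 < u := by
      have := hfu 0 (subset_closure ⟨0, by simp⟩)
      simpa using this
    -- the scalar function g
    set g : ℝ → ℝ := fun t => f (T (Real.toNNReal t) x₀) with hg
    have hg1 : ∀ t : ℝ, 1 ≤ t → g t = 0 := by
      intro t ht
      have h1le : (1 : ℝ≥0) ≤ Real.toNNReal t := by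
        rw [← Real.toNNReal_one]
        exact Real.toNNReal_mono ht
      have hsplit : (1 : ℝ≥0) + (Real.toNNReal t - 1) = Real.toNNReal t :=
        add_tsub_cancel_of_le h1le
      have hTt : T (Real.toNNReal t) = (T 1).comp (T (Real.toNNReal t - 1)) := by
        rw [← hTadd, hsplit]
      rw [hg]; dsimp only; rw [hTt]
      exact hf0 _
    have hana : AnalyticOnNhd ℝ g (Set.Ioi (0 : ℝ)) := by
      intro t₀ ht₀
      rw [Set.mem_Ioi] at ht₀
      obtain ⟨ε, hε, A, hA⟩ := hholo (Real.toNNReal t₀) (by simpa using ht₀)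
      refine analyticAt_of_hasSum_pow (c := fun k => f (A k x₀))
        (r := min ε t₀) (lt_min hε ht₀) ?_
      intro y hy
      have hyε : |y| < ε := lt_of_lt_of_le hy (min_le_left _ _)
      have hyt : |y| < t₀ := lt_of_lt_of_le hy (min_le_right _ _)
      have hty : (0 : ℝ) < t₀ + y := by
        have := neg_lt_of_abs_lt hyt
        linarith
      have hcoe : ((Real.toNNReal (t₀ + y) : ℝ≥0) : ℝ) = t₀ + y :=
        Real.coe_toNNReal _ hty.le
      have hcoe₀ : ((Real.toNNReal t₀ : ℝ≥0) : ℝ) = t₀ :=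
        Real.coe_toNNReal _ ht₀.le
      have habs : |((Real.toNNReal (t₀ + y) : ℝ≥0) : ℝ) - ((Real.toNNReal t₀ : ℝ≥0) : ℝ)| < ε := by
        rw [hcoe, hcoe₀]
        simpa using hyε
      have hsum := hA (Real.toNNReal (t₀ + y)) habs x₀
      have hsum2 := hsum.mapL f
      rw [hcoe, hcoe₀] at hsum2
      have hterm : ∀ k : ℕ, f ((t₀ + y - t₀) ^ k • A k x₀) = y ^ k * f (A k x₀) := by
        intro k
        rw [map_smul]
        simp [smul_eq_mul]
      simp only [hterm] at hsum2
      have hgval : g (t₀ + y) = f (T (Real.toNNReal (t₀ + y)) x₀) := rfl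
      rw [hgval]
      exact hsum2
    have hzero : Set.EqOn g 0 (Set.Ioi (0 : ℝ)) := by
      refine hana.eqOn_zero_of_preconnected_of_eventuallyEq_zero isPreconnected_Ioi
        (show (2 : ℝ) ∈ Set.Ioi (0 : ℝ) by norm_num) ?_
      have hmem : Set.Ioi (1 : ℝ) ∈ nhds (2 : ℝ) := Ioi_mem_nhds (by norm_num)
      filter_upwards [hmem] with t ht
      exact hg1 t (le_of_lt ht)
    -- limit as t → 0+
    have hlim : Tendsto (fun t : ℝ≥0 => f (T t x₀)) (nhdsWithin 0 (Set.Ioi 0))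
        (nhds (f x₀)) := ((f.continuous.tendsto _).comp (hcont x₀))
    have heq : ∀ t : ℝ≥0, 0 < t → f (T t x₀) = 0 := by
      intro t ht
      have h1 := hzero (show ((t : ℝ)) ∈ Set.Ioi (0 : ℝ) by exact_mod_cast ht)
      have h2 : Real.toNNReal ((t : ℝ)) = t := Real.toNNReal_coe
      rw [hg] at h1
      simp only [h2] at h1
      simpa using h1
    have hlim0 : Tendsto (fun t : ℝ≥0 => f (T t x₀)) (nhdsWithin 0 (Set.Ioi 0))
        (nhds 0) := by
      refine Tendsto.congr' ?_ tendsto_const_nhds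
      filter_upwards [self_mem_nhdsWithin] with t ht
      exact (heq t ht).symm
    have hfx0 : f x₀ = 0 := tendsto_nhds_unique hlim hlim0
    rw [hfx0] at hux
    linarith
  -- Step 2: Mittag-Leffler style construction.
  intro x
  rw [Metric.mem_closure_iff]
  intro η hη
  set M : ℝ := max ‖S‖ 1 with hM
  have hM1 : (1 : ℝ) ≤ M := le_max_right _ _
  have hM0 : (0 : ℝ) < M := lt_of_lt_of_le one_pos hM1
  set δ : ℕ → ℝ := fun n => η / (4 * 2 ^ n * M ^ n) with hδdef
  have hδ : ∀ n, 0 < δ n := by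
    intro n
    apply div_pos hη
    positivity
  have hstep : ∀ (n : ℕ) (z : X), ∃ y', dist z (S y') < δ n := fun n z =>
    hdr.exists_dist_lt z (hδ n)
  choose F hF using hstep
  set y : ℕ → X := fun n => Nat.rec x (fun n yn => F n yn) n with hydef
  have hy0 : y 0 = x := rfl
  have hys : ∀ n, y (n + 1) = F n (y n) := fun n => rfl
  have hclose : ∀ n, ‖S (y (n + 1)) - y n‖ < δ n := by
    intro n
    have := hF n (y n)
    rw [dist_eq_norm, norm_sub_rev] at this
    rw [hys n]
    exact this
  -- operator norm bound for T applied to natural times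
  have hTnorm : ∀ (j : ℕ) (z : X), ‖T (j : ℝ≥0) z‖ ≤ M ^ j * ‖z‖ := by
    intro j
    induction j with
    | zero => intro z; simp [hT0]
    | succ j ih =>
      intro z
      have hcast : ((j + 1 : ℕ) : ℝ≥0) = (j : ℝ≥0) + 1 := by push_cast; ring
      have : T ((j + 1 : ℕ) : ℝ≥0) z = T (j : ℝ≥0) (S z) := by
        rw [hcast, hTadd]; rfl
      rw [this]
      calc ‖T (j : ℝ≥0) (S z)‖ ≤ M ^ j * ‖S z‖ := ih (S z)
        _ ≤ M ^ j * (M * ‖z‖) := by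
            apply mul_le_mul_of_nonneg_left _ (pow_nonneg hM0.le j)
            calc ‖S z‖ ≤ ‖S‖ * ‖z‖ := S.le_opNorm z
              _ ≤ M * ‖z‖ := mul_le_mul_of_nonneg_right (le_max_left _ _) (norm_nonneg z)
        _ = M ^ (j + 1) * ‖z‖ := by ring
  set u : ℕ → ℕ → X := fun m j => T (j : ℝ≥0) (y (m + j)) with hudef
  have hu_succ : ∀ m j, u m (j + 1) = T (j : ℝ≥0) (S (y (m + j + 1))) := by
    intro m j
    have hcast : ((j + 1 : ℕ) : ℝ≥0) = (j : ℝ≥0) + 1 := by push_cast; ring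
    rw [hudef]
    dsimp only
    rw [hcast, hTadd]
    rfl
  have hdistu : ∀ m j, dist (u m j) (u m (j + 1)) ≤ (η / (4 * 2 ^ m)) * (1 / 2) ^ j := by
    intro m j
    rw [hu_succ, dist_eq_norm]
    have h1 : u m j - T (j : ℝ≥0) (S (y (m + j + 1)))
        = T (j : ℝ≥0) (y (m + j) - S (y (m + j + 1))) := by
      rw [hudef]; dsimp only; rw [map_sub]
    rw [h1]
    calc ‖T (j : ℝ≥0) (y (m + j) - S (y (m + j + 1)))‖
        ≤ M ^ j * ‖y (m + j) - S (y (m + j + 1))‖ := hTnorm j _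
      _ ≤ M ^ j * δ (m + j) := by
          apply mul_le_mul_of_nonneg_left _ (pow_nonneg hM0.le j)
          rw [norm_sub_rev]
          exact (hclose (m + j)).le
      _ = η / (4 * 2 ^ m) * (1 / 2) ^ j * (M ^ j / M ^ (m + j)) := by
          rw [hδdef]
          field_simp
          have h2 : ((1:ℝ) / 2) ^ j * 2 ^ j = 1 := by rw [← mul_pow]; norm_num
          linear_combination (-(2:ℝ) ^ m) * h2
      _ ≤ η / (4 * 2 ^ m) * (1 / 2) ^ j * 1 := by
          apply mul_le_mul_of_nonneg_left
          · rw [div_le_one (by positivity)]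
            apply pow_le_pow_right₀ hM1
            omega
          · positivity
      _ = η / (4 * 2 ^ m) * (1 / 2) ^ j := by ring
  have hcauchy : ∀ m, ∃ w, Tendsto (u m) atTop (nhds w) := by
    intro m
    have : CauchySeq (u m) :=
      cauchySeq_of_le_geometric (1 / 2) (η / (4 * 2 ^ m)) (by norm_num) (hdistu m)
    exact cauchySeq_tendsto_of_complete this
  choose w hw using hcauchy
  -- S (w (m+1)) = w m
  have hSw : ∀ m, S (w (m + 1)) = w m := by
    intro m
    have h1 : Tendsto (fun j => S (u (m + 1) j)) atTop (nhds (S (w (m + 1)))) :=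
      (S.continuous.tendsto _).comp (hw (m + 1))
    have h2 : ∀ j, S (u (m + 1) j) = u m (j + 1) := by
      intro j
      have hidx : m + (j + 1) = m + 1 + j := by omega
      have hcast : ((j + 1 : ℕ) : ℝ≥0) = 1 + (j : ℝ≥0) := by push_cast; ring
      show S (T ((j : ℕ) : ℝ≥0) (y (m + 1 + j))) = T ((j + 1 : ℕ) : ℝ≥0) (y (m + (j + 1)))
      rw [hidx, hcast, hTadd]
      rfl
    have h1' : Tendsto (fun j => u m (j + 1)) atTop (nhds (w m)) :=
      (hw m).comp (tendsto_add_atTop_nat 1)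
    have h1'' : Tendsto (fun j => u m (j + 1)) atTop (nhds (S (w (m + 1)))) := by
      refine h1.congr (fun j => h2 j)
    exact tendsto_nhds_unique h1'' h1'
  -- T m (w m) = w 0
  have hTm : ∀ m : ℕ, T ((m : ℕ) : ℝ≥0) (w m) = w 0 := by
    intro m
    induction m with
    | zero => simp [hT0]
    | succ m ih =>
      have hcast : ((m + 1 : ℕ) : ℝ≥0) = (m : ℝ≥0) + 1 := by push_cast; ring
      rw [hcast, hTadd]
      have : (T ((m : ℕ) : ℝ≥0)).comp (T 1) (w (m + 1))
          = T ((m : ℕ) : ℝ≥0) (S (w (m + 1))) := rfl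
      rw [this, hSw m]
      exact ih
  -- w 0 is in D
  have hmem : w 0 ∈ {x : X | ∀ t : ℝ≥0, 0 < t → ∃ y : X, T t y = x} := by
    intro t ht
    obtain ⟨m, hm⟩ := exists_nat_ge t
    refine ⟨T ((m : ℝ≥0) - t) (w m), ?_⟩
    rw [← ContinuousLinearMap.comp_apply, ← hTadd, add_tsub_cancel_of_le hm]
    exact hTm m
  -- w 0 is close to x
  have hdist : dist x (w 0) < η := by
    have h0 : u 0 0 = x := by
      rw [hudef]; dsimp only; rw [Nat.cast_zero, hT0]; rfl
    have hle : dist (u 0 0) (w 0) ≤ (η / (4 * 2 ^ 0)) / (1 - 1 / 2) :=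
      dist_le_of_le_geometric_of_tendsto₀ (r := 1/2) (C := η / (4 * 2 ^ 0))
        (by norm_num) (hdistu 0) (hw 0)
    rw [h0] at hle
    have : (η / (4 * 2 ^ 0)) / (1 - 1 / 2 : ℝ) = η / 2 := by ring
    rw [this] at hle
    linarith
  exact ⟨w 0, hmem, hdist⟩
end

section
/- Let T be a one-parameter semigroup of bounded linear operators on a real Banach space X with the backward uniqueness property. For x ∈ D and n ∈ ℕ, let T₋ₙx denote the unique y ∈ X with T n y = x (unique by backward uniqueness), and set ‖x‖ₙ = ‖T₋ₙx‖. Then: (i) each ‖·‖ₙ is a norm on the linear subspace D (in particular ‖x‖ₙ = 0 implies x = 0); and (ii) D is complete with respect to this countable family of norms: if (y_m) is a sequence in D such that for every n ∈ ℕ the sequence (T₋ₙ y_m)_m is Cauchy in X, then there exists z ∈ D such that for every n ∈ ℕ, T₋ₙ y_m → T₋ₙ z in X as m → ∞. -/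
open NNReal Filter

/-- **Proposition 2.** Let `T` be a linear semigroup with the backward uniqueness
property on a real Banach space `X`, and let `back n x` denote the unique backward
image `T₋ₙ x` of a point `x ∈ D = {x : ∀ t > 0, ∃ y, T t y = x}` (so that
`T n (back n x) = x`).  Then the seminorms `‖x‖ₙ = ‖back n x‖` are norms on `D`
(they are definite, subadditive and absolutely homogeneous), and `D` is complete
with respect to this countable family of norms: every sequence in `D` which is
Cauchy for each `‖·‖ₙ` converges in each `‖·‖ₙ` to an element of `D`. -/
theorem D_frechet_space
    {X : Type*} [NormedAddCommGroup X] [NormedSpace ℝ X] [CompleteSpace X]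
    (T : ℝ≥0 → X →L[ℝ] X) (M w : ℝ) (hM : 1 ≤ M) (hw : 0 ≤ w)
    (hT0 : T 0 = ContinuousLinearMap.id ℝ X)
    (hTadd : ∀ s t : ℝ≥0, T (s + t) = (T s).comp (T t))
    (hbound : ∀ t : ℝ≥0, ‖T t‖ ≤ M * Real.exp (w * (t : ℝ)))
    (hbu : ∀ t : ℝ≥0, 0 < t → ∀ x y : X, T t x = T t y → x = y)
    (D : Set X) (hD : D = {x : X | ∀ t : ℝ≥0, 0 < t → ∃ y : X, T t y = x})
    (back : ℕ → X → X)
    (hback : ∀ n : ℕ, ∀ x ∈ D, T (n : ℝ≥0) (back n x) = x) :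
    (∀ n : ℕ, ∀ x ∈ D, ‖back n x‖ = 0 → x = 0) ∧
    (∀ n : ℕ, ∀ x ∈ D, ∀ y ∈ D, ‖back n (x + y)‖ ≤ ‖back n x‖ + ‖back n y‖) ∧
    (∀ n : ℕ, ∀ x ∈ D, ∀ c : ℝ, ‖back n (c • x)‖ = |c| * ‖back n x‖) ∧
    (∀ y : ℕ → X, (∀ m : ℕ, y m ∈ D) →
      (∀ n : ℕ, CauchySeq (fun m => back n (y m))) →
      ∃ z ∈ D, ∀ n : ℕ,
        Tendsto (fun m => back n (y m)) atTop (nhds (back n z))) := by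
  -- Uniqueness of backward images
  have huniq : ∀ n : ℕ, ∀ x ∈ D, ∀ u : X, T (n : ℝ≥0) u = x → u = back n x := by
    intro n x hx u hu
    cases n with
    | zero =>
        have h1 := hback 0 x hx
        simp only [Nat.cast_zero, hT0, ContinuousLinearMap.id_apply] at hu h1
        rw [hu, h1]
    | succ k =>
        refine hbu ((k+1 : ℕ) : ℝ≥0) (by exact_mod_cast Nat.succ_pos k) u (back (k+1) x) ?_
        rw [hu, hback _ x hx]
  -- D is closed under addition
  have hadd : ∀ x ∈ D, ∀ y ∈ D, x + y ∈ D := by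
    intro x hx y hy
    rw [hD] at hx hy ⊢
    intro t ht
    obtain ⟨a, ha⟩ := hx t ht
    obtain ⟨b, hb⟩ := hy t ht
    exact ⟨a + b, by rw [map_add, ha, hb]⟩
  -- D is closed under scalar multiplication
  have hsmul : ∀ x ∈ D, ∀ c : ℝ, c • x ∈ D := by
    intro x hx c
    rw [hD] at hx ⊢
    intro t ht
    obtain ⟨a, ha⟩ := hx t ht
    exact ⟨c • a, by rw [map_smul, ha]⟩
  refine ⟨?_, ?_, ?_, ?_⟩
  · intro n x hx h0
    have : back n x = 0 := norm_eq_zero.mp h0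
    have := hback n x hx
    rw [‹back n x = 0›, map_zero] at this
    exact this.symm
  · intro n x hx y hy
    have hmem := hadd x hx y hy
    have : back n (x + y) = back n x + back n y := by
      refine (huniq n (x + y) hmem (back n x + back n y) ?_).symm
      rw [map_add, hback n x hx, hback n y hy]
    rw [this]
    exact norm_add_le _ _
  · intro n x hx c
    have hmem := hsmul x hx c
    have : back n (c • x) = c • back n x := by
      refine (huniq n (c • x) hmem (c • back n x) ?_).symm
      rw [map_smul, hback n x hx]
    rw [this, norm_smul, Real.norm_eq_abs]
  · intro y hyD hcau
    -- limits of each backward sequence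
    have hlim : ∀ n : ℕ, ∃ zn : X, Tendsto (fun m => back n (y m)) atTop (nhds zn) :=
      fun n => cauchySeq_tendsto_of_complete (hcau n)
    choose zn hzn using hlim
    -- y m = back 0 (y m) tends to zn 0
    have hy0 : ∀ m, back 0 (y m) = y m := by
      intro m
      have := hback 0 (y m) (hyD m)
      simpa [hT0] using this
    have hyz : Tendsto y atTop (nhds (zn 0)) := by
      have := hzn 0
      simpa [hy0] using this
    -- T n (zn n) = zn 0
    have hTn : ∀ n : ℕ, T (n : ℝ≥0) (zn n) = zn 0 := by
      intro n
      have h1 : Tendsto (fun m => T (n : ℝ≥0) (back n (y m))) atTop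
          (nhds (T (n : ℝ≥0) (zn n))) := ((T (n : ℝ≥0)).continuous.tendsto _).comp (hzn n)
      have h2 : (fun m => T (n : ℝ≥0) (back n (y m))) = y := by
        funext m; exact hback n (y m) (hyD m)
      rw [h2] at h1
      exact tendsto_nhds_unique h1 hyz
    -- zn 0 ∈ D
    have hzD : zn 0 ∈ D := by
      rw [hD]
      intro t ht
      set n : ℕ := ⌈(t : ℝ)⌉₊ with hn
      have htn : t ≤ (n : ℝ≥0) := by
        have := Nat.le_ceil (t : ℝ)
        exact_mod_cast this
      refine ⟨T ((n : ℝ≥0) - t) (zn n), ?_⟩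
      have : T (t + ((n : ℝ≥0) - t)) (zn n) = zn 0 := by
        rw [add_tsub_cancel_of_le htn]
        exact hTn n
      rw [hTadd] at this
      exact this
    refine ⟨zn 0, hzD, fun n => ?_⟩
    have : back n (zn 0) = zn n := (huniq n (zn 0) hzD (zn n) (hTn n)).symm
    rw [this]
    exact hzn n
end

section
/- Let T be a one-parameter semigroup of bounded linear operators on a real Banach space X with ‖T t‖ ≤ M·exp(w·t), and assume: (I) the set D = {x ∈ X : ∀ t > 0, ∃ y ∈ X, T t y = x} is dense in X, and (II) T has the backward uniqueness property. Then there exist a real vector space E, an injective linear map ι : X → E, and a family of linear maps 𝒯 t : E → E indexed by t ∈ ℝ such that: 𝒯 0 = id; 𝒯 (t+s) = 𝒯 t ∘ 𝒯 s for all real t, s (so that each 𝒯 t is a linear bijection of E and (𝒯 t)_{t∈ℝ} is a one-parameter group); and ι (T t x) = 𝒯 t (ι x) for every t ≥ 0 and every x ∈ X. -/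
open NNReal

universe u

/-- An extension of a semigroup `T` on `X` to a one-parameter group: a real
vector space `E`, an injective linear embedding `ι : X → E`, and a family of
linear maps `τ t : E → E` (`t ∈ ℝ`) with `τ 0 = id`, `τ (t+s) = τ t ∘ τ s`
(so each `τ t` is a linear bijection and `(τ t)` is a one-parameter group),
which extends the action of `T`: `ι (T t x) = τ t (ι x)` for `t ≥ 0`. -/
structure SemigroupGroupExtension {X : Type u} [NormedAddCommGroup X]
    [NormedSpace ℝ X] (T : ℝ≥0 → X →L[ℝ] X) : Type (u + 1) where
  E : Type u
  [instAddCommGroup : AddCommGroup E]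
  [instModule : Module ℝ E]
  ι : X →ₗ[ℝ] E
  τ : ℝ → E →ₗ[ℝ] E
  ι_injective : Function.Injective ι
  τ_zero : τ 0 = LinearMap.id
  τ_add : ∀ t s : ℝ, τ (t + s) = (τ t).comp (τ s)
  extends_T : ∀ (t : ℝ≥0) (x : X), ι (T t x) = τ (t : ℝ) (ι x)

private theorem keyNN (t s : ℝ) :
    ((-s).toNNReal + (-t).toNNReal - (-(t + s)).toNNReal) + (t + s).toNNReal
      = t.toNNReal + s.toNNReal := by
  have hle : (-(t + s)).toNNReal ≤ (-s).toNNReal + (-t).toNNReal := by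
    rw [show -(t + s) = -s + -t by ring]
    exact Real.toNNReal_add_le
  rw [tsub_add_eq_add_tsub hle, tsub_eq_iff_eq_add_of_le (hle.trans le_self_add)]
  apply NNReal.coe_injective
  push_cast [Real.coe_toNNReal']
  simp only [max_def]
  split_ifs <;> linarith

/-- **Theorem 1.** Let `T` be a linear semigroup of bounded operators on a real
Banach space `X` with `‖T t‖ ≤ M exp (w t)`. Assume (I) the set
`D = {x : ∀ t > 0, ∃ y, T t y = x}` is dense in `X`, and (II) `T` has the
backward uniqueness property.  Then the semigroup `T` extends to a
one-parameter group `𝒯 t` (`t ∈ ℝ`) on an extended vector space `E ⊇ X`. -/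
theorem exists_group_extension
    {X : Type u} [NormedAddCommGroup X] [NormedSpace ℝ X] [CompleteSpace X]
    (T : ℝ≥0 → X →L[ℝ] X) (M w : ℝ) (hM : 1 ≤ M) (hw : 0 ≤ w)
    (hT0 : T 0 = ContinuousLinearMap.id ℝ X)
    (hTadd : ∀ s t : ℝ≥0, T (s + t) = (T s).comp (T t))
    (hbound : ∀ t : ℝ≥0, ‖T t‖ ≤ M * Real.exp (w * (t : ℝ)))
    (hdense : Dense {x : X | ∀ t : ℝ≥0, 0 < t → ∃ y : X, T t y = x})
    (hbu : ∀ t : ℝ≥0, 0 < t → ∀ x y : X, T t x = T t y → x = y) :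
    Nonempty (SemigroupGroupExtension T) := by
  classical
  have hTapp : ∀ (s t : ℝ≥0) (x : X), T s (T t x) = T (s + t) x := fun s t x => by
    rw [hTadd]; rfl
  have hinj : ∀ t : ℝ≥0, Function.Injective (T t) := by
    intro t
    rcases eq_or_lt_of_le (show (0:ℝ≥0) ≤ t from zero_le) with h | h
    · rw [← h, hT0]; intro a b hab; simpa using hab
    · exact fun a b hab => hbu t h a b hab
  set F : ∀ (i j : ℝ≥0), i ≤ j → X →ₗ[ℝ] X :=
    fun i j _ => (T (j - i)).toLinearMap with hF
  haveI hds : DirectedSystem (fun _ : ℝ≥0 => X) (fun i j h => F i j h) := by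
    constructor
    · intro i x
      show T (i - i) x = x
      rw [tsub_self, hT0]; rfl
    · intro k j i hij hjk x
      show T (k - j) (T (j - i) x) = T (k - i) x
      rw [hTapp, tsub_add_tsub_cancel hjk hij]
  set E := Module.DirectLimit (fun _ : ℝ≥0 => X) F with hE
  set of : ∀ _ : ℝ≥0, X →ₗ[ℝ] E :=
    fun i => Module.DirectLimit.of ℝ ℝ≥0 (fun _ => X) F i with hof
  have keyof : ∀ (i j : ℝ≥0) (h : i ≤ j) (x : X), of i x = of j (T (j - i) x) := by
    intro i j h x
    exact (Module.DirectLimit.of_f (f := F) (hij := h) (x := x)).symm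
  have compat : ∀ (r : ℝ) (i j : ℝ≥0) (hij : i ≤ j) (x : X),
      ((of (j + (-r).toNNReal)).comp (T r.toNNReal).toLinearMap) (F i j hij x)
        = ((of (i + (-r).toNNReal)).comp (T r.toNNReal).toLinearMap) x := by
    intro r i j hij x
    show of (j + (-r).toNNReal) (T r.toNNReal (T (j - i) x))
      = of (i + (-r).toNNReal) (T r.toNNReal x)
    rw [keyof (i + (-r).toNNReal) (j + (-r).toNNReal) (by gcongr) (T r.toNNReal x),
      add_tsub_add_eq_tsub_right, hTapp, hTapp, add_comm r.toNNReal (j - i)]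
  set τ : ℝ → E →ₗ[ℝ] E := fun r =>
    Module.DirectLimit.lift ℝ ℝ≥0 (fun _ => X) F
      (fun i => (of (i + (-r).toNNReal)).comp (T r.toNNReal).toLinearMap)
      (compat r) with hτ
  have τof : ∀ (r : ℝ) (i : ℝ≥0) (x : X),
      τ r (of i x) = of (i + (-r).toNNReal) (T r.toNNReal x) := fun r i x =>
    Module.DirectLimit.lift_of _ _ _
  refine ⟨⟨E, of 0, τ, ?_, ?_, ?_, ?_⟩⟩
  · intro x y hxy
    have h0 : of 0 (x - y) = 0 := by rw [map_sub, hxy, sub_self]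
    obtain ⟨j, hj, hz⟩ := Module.DirectLimit.of.zero_exact h0
    have hz' : T (j - 0) (x - y) = 0 := hz
    have : x - y = 0 := hinj (j - 0) (by rw [hz', map_zero])
    exact sub_eq_zero.mp this
  · apply LinearMap.ext
    intro z
    induction z using Module.DirectLimit.induction_on with
    | ih i x =>
      rw [τof]
      simp [Real.toNNReal_zero, hT0]
      rfl
  · intro t s
    apply LinearMap.ext
    intro z
    induction z using Module.DirectLimit.induction_on with
    | ih i x =>
      rw [LinearMap.comp_apply, τof, τof, τof]
      have hle : (-(t + s)).toNNReal ≤ (-s).toNNReal + (-t).toNNReal := by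
        rw [show -(t + s) = -s + -t by ring]
        exact Real.toNNReal_add_le
      rw [keyof (i + (-(t + s)).toNNReal) (i + ((-s).toNNReal + (-t).toNNReal))
        (by gcongr) (T (t + s).toNNReal x)]
      rw [add_tsub_add_eq_tsub_left, hTapp, keyNN, ← hTapp, ← add_assoc]
  · intro t x
    show of 0 (T t x) = τ (t : ℝ) (of 0 x)
    rw [τof]
    rw [Real.toNNReal_of_nonpos (neg_nonpos.2 t.coe_nonneg), add_zero, Real.toNNReal_coe]
end

section
/- Let λ : ℕ → ℝ with λ_n → −∞ as n → ∞, and let D = {a ∈ ℓ²(ℕ, ℝ) : for every m ∈ ℕ, the sequence (a_n · exp(−λ_n · m))_n belongs to ℓ²}, equipped with the countable family of norms ‖a‖ₘ = ‖(a_n · exp(−λ_n · m))_n‖_{ℓ²}. Let f : D → ℝ be a linear functional that is continuous with respect to this family, i.e., there exist m ∈ ℕ and C > 0 with |f(a)| ≤ C · ‖a‖ₘ for all a ∈ D, and set b_k = f(e_k) where e_k is the k-th standard unit sequence. Then there exist t ∈ ℝ and β ∈ ℓ²(ℕ, ℝ) such that b_k = β_k · exp(λ_k · t) for all k ∈ ℕ.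 (This is the content of D* = E for the diagonal semigroup T t a = (exp(λ_n t) a_n)_n.) -/
/-- **Proposition 7** (the inclusion `D* ⊆ E`). Let `λ : ℕ → ℝ` with
`λ n → −∞`, and let `D` be the set of square-summable sequences `a` such that
`(a n · exp (−λ n · m))ₙ ∈ ℓ²` for every `m ∈ ℕ`, a Fréchet space under the
norms `‖a‖ₘ = ‖(a n · exp (−λ n · m))ₙ‖_{ℓ²}`.  If `f` is a linear functional
on `D` that is continuous for this family of norms, i.e. `|f a| ≤ C ‖a‖ₘ` for
some `m` and `C > 0`, and `b k = f (e k)`, then there exist `t ∈ ℝ` and a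
square-summable `β` such that `b k = β k · exp (λ k · t)` for all `k`. -/
theorem continuous_functional_on_D_mem_E
    (lam : ℕ → ℝ) (hlam : Filter.Tendsto lam Filter.atTop Filter.atBot)
    (D : Set (ℕ → ℝ))
    (hD : D = {a : ℕ → ℝ | ∀ m : ℕ,
      Summable (fun n => (a n * Real.exp (-lam n * (m : ℝ))) ^ 2)})
    (f : (ℕ → ℝ) → ℝ)
    (hadd : ∀ a ∈ D, ∀ b ∈ D, f (a + b) = f a + f b)
    (hsmul : ∀ c : ℝ, ∀ a ∈ D, f (c • a) = c * f a)
    (m : ℕ) (C : ℝ) (hC : 0 < C)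
    (hbound : ∀ a ∈ D,
      |f a| ≤ C * Real.sqrt (∑' n, (a n * Real.exp (-lam n * (m : ℝ))) ^ 2)) :
    ∃ (t : ℝ) (β : ℕ → ℝ), Summable (fun n => (β n) ^ 2) ∧
      ∀ k : ℕ, f (Pi.single k 1) = β k * Real.exp (lam k * t) := by
  classical
  have hE : ∀ x y : ℝ, Real.exp x * Real.exp y = Real.exp (x + y) := by
    intro x y; rw [← Real.exp_add]
  have hP : ∀ x : ℝ, Real.exp x ^ 2 = Real.exp (2 * x) := by
    intro x; rw [sq, hE]; ring_nf
  set b : ℕ → ℝ := fun k => f (Pi.single k 1) with hb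
  set β : ℕ → ℝ := fun k => b k * Real.exp (lam k * m) with hβ
  -- indicator functions of finite sets are in D
  have hmemD : ∀ (s : Finset ℕ) (c : ℕ → ℝ),
      (fun n => if n ∈ s then c n else 0) ∈ D := by
    intro s c
    rw [hD]
    intro m'
    apply summable_of_ne_finset_zero (s := s)
    intro n hn
    simp [hn]
  -- f on finitely supported sequences
  have hfsum : ∀ (s : Finset ℕ) (c : ℕ → ℝ),
      f (fun n => if n ∈ s then c n else 0) = ∑ k ∈ s, c k * b k := by
    intro s
    induction s using Finset.induction_on with
    | empty =>
      intro c
      have h0 : (fun n : ℕ => if n ∈ (∅ : Finset ℕ) then c n else 0)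
          = (0 : ℝ) • (fun n : ℕ => if n ∈ (∅ : Finset ℕ) then c n else 0) := by
        funext n; simp
      rw [h0, hsmul 0 _ (hmemD ∅ c)]
      simp
    | @insert a s ha ih =>
      intro c
      have hsingle : ((Pi.single a 1 : ℕ → ℝ)) ∈ D := by
        have := hmemD {a} (fun _ => 1)
        convert this using 1
        funext n
        by_cases h : n = a <;> simp [Pi.single_apply, h]
      have hsm : (c a • (Pi.single a 1 : ℕ → ℝ)) ∈ D := by
        rw [hD] at hsingle ⊢
        intro m'
        have := (hsingle m').mul_left ((c a) ^ 2)
        convert this using 2 with n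
        · rfl
        simp [Pi.smul_apply]
        ring
      have hsplit : (fun n => if n ∈ insert a s then c n else 0)
          = (c a • (Pi.single a 1 : ℕ → ℝ)) + (fun n => if n ∈ s then c n else 0) := by
        funext n
        by_cases h : n = a
        · subst h
          simp [ha, Pi.single_apply]
        · simp [Pi.single_apply, h]
      rw [hsplit, hadd _ hsm _ (hmemD s c),
        hsmul (c a) _ hsingle, ih c, Finset.sum_insert ha]
  -- key finite bound
  have hkey : ∀ s : Finset ℕ, ∑ k ∈ s, (β k) ^ 2 ≤ C ^ 2 := by
    intro s
    set c : ℕ → ℝ := fun k => b k * Real.exp (2 * lam k * m) with hc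
    set a : ℕ → ℝ := fun n => if n ∈ s then c n else 0 with haa
    have haD : a ∈ D := hmemD s c
    have hfa : f a = ∑ k ∈ s, (β k) ^ 2 := by
      rw [hfsum s c]
      apply Finset.sum_congr rfl
      intro k _
      rw [hc, hβ]
      simp only []
      rw [mul_pow, hP]
      ring_nf
    have hnorm : (∑' n, (a n * Real.exp (-lam n * (m : ℝ))) ^ 2)
        = ∑ k ∈ s, (β k) ^ 2 := by
      rw [tsum_eq_sum (s := s) (by intro n hn; simp [haa, hn])]
      apply Finset.sum_congr rfl
      intro k hk
      simp only [haa, hk, if_pos, hc, hβ]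
      rw [mul_pow, mul_pow, mul_pow, hP, hP, hP, mul_assoc, hE]
      ring_nf
    have hX : |∑ k ∈ s, (β k) ^ 2| ≤ C * Real.sqrt (∑ k ∈ s, (β k) ^ 2) := by
      have := hbound a haD
      rw [hfa, hnorm] at this
      exact this
    set X := ∑ k ∈ s, (β k) ^ 2 with hXdef
    have hX0 : 0 ≤ X := Finset.sum_nonneg fun k _ => sq_nonneg _
    rw [abs_of_nonneg hX0] at hX
    have hs0 : 0 ≤ Real.sqrt X := Real.sqrt_nonneg _
    have hs2 : Real.sqrt X ^ 2 = X := Real.sq_sqrt hX0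
    nlinarith [hC.le]
  refine ⟨-(m : ℝ), β, summable_of_sum_le (fun k => sq_nonneg _) hkey, ?_⟩
  intro k
  rw [hβ]
  simp only []
  rw [mul_assoc, ← Real.exp_add]
  simp
  rfl
end
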